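/- arXiv:1302.0161 — 2 statements merged into one kernel-verified Lean document; each statement's English description precedes it below -/
import Mathlib

section
/- The corner-weighted identity operator I_χ is a bijection of norm at most one: let K be a compact metric space, Γ and B closed subsets with Γ ∪ B = K and Γ ∩ B = {a, b} for two points a, b ∈ K, and let χ : K → [0,1] be continuous with χ(a) = 1 and χ(b) = 0. Define I_χ : C(K) → C(K) by (I_χ φ)(x) = φ(x) for x ∈ Γ and (I_χ φ)(x) = ½ [φ(x) + χ(x) φ(a) + (1 − χ(x)) φ(b)] for x ∈ B (these agree at a and b, so I_χ φ is well defined and continuous). Then I_χ is a linear bijection of C(K) with inverse (I_χ^{-1} ψ)(x) = ψ(x) for x ∈ Γ and (I_χ^{-1} ψ)(x) = 2ψ(x) − χ(x) ψ(a) − (1 − χ(x)) ψ(b) for x ∈ B, and ‖I_χ φ‖_∞ ≤ ‖φ‖_{∞,0} for all φ ∈ C(K), where ‖φ‖_{∞,0} := max{ sup_{x∈Γ} [ |χ(x)(φ(x) − φ(a))| + |(1 − χ(x))(φ(x) − φ(b))| + |φ(a)| + |φ(b)| ], sup_{x∈B} [ |½ χ(x)(φ(x) − φ(a))| + |½ (1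 − χ(x))(φ(x) − φ(b))| + |φ(a)| + |φ(b)| ] }. -/
open Real Set
open scoped Classical

/-- The corner-weighted identity operator `I_χ`. -/
noncomputable def Ichi {K : Type*} (Γ : Set K) (a b : K) (χ : K → ℝ)
    (φ : K → ℂ) : K → ℂ :=
  fun x => if x ∈ Γ then φ x
    else (1 / 2 : ℂ) * (φ x + (χ x : ℂ) * φ a + ((1 - χ x : ℝ) : ℂ) * φ b)

/-- The inverse of the corner-weighted identity operator `I_χ`. -/
noncomputable def IchiInv {K : Type*} (Γ : Set K) (a b : K) (χ : K → ℝ)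
    (ψ : K → ℂ) : K → ℂ :=
  fun x => if x ∈ Γ then ψ x
    else 2 * ψ x - (χ x : ℂ) * ψ a - ((1 - χ x : ℝ) : ℂ) * ψ b

/-- The corner-adapted norm `‖φ‖_{∞,0}` on `C(K)`. -/
noncomputable def cornerNorm {K : Type*} (Γ B : Set K) (a b : K)
    (χ : K → ℝ) (φ : K → ℂ) : ℝ :=
  max
    (sSup ((fun x => ‖χ x • (φ x - φ a)‖ + ‖(1 - χ x) • (φ x - φ b)‖ +
      ‖φ a‖ + ‖φ b‖) '' Γ))
    (sSup ((fun x => ‖(1 / 2 : ℝ) • (χ x • (φ x - φ a))‖ +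
      ‖(1 / 2 : ℝ) • ((1 - χ x) • (φ x - φ b))‖ + ‖φ a‖ + ‖φ b‖) '' B))

/-- The corner-weighted identity operator `I_χ` is a well-defined linear bijection of
`C(K)`, with the stated inverse, and its `sup`-norm is bounded by the corner-adapted
norm `‖·‖_{∞,0}`. -/
theorem Ichi_bijection {K : Type*} [MetricSpace K] [CompactSpace K]
    (Γ B : Set K) (hΓ : IsClosed Γ) (hB : IsClosed B)
    (hcover : Γ ∪ B = Set.univ) (a b : K) (hinter : Γ ∩ B = {a, b})
    (χ : K → ℝ) (hχ : Continuous χ) (hχ01 : ∀ x, χ x ∈ Set.Icc (0 : ℝ) 1)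
    (hχa : χ a = 1) (hχb : χ b = 0) :
    -- `I_χ` maps continuous functions to continuous functions
    (∀ φ : K → ℂ, Continuous φ → Continuous (Ichi Γ a b χ φ)) ∧
    -- `I_χ φ` is given on `B` by the stated formula (well-definedness at `a` and `b`)
    (∀ φ : K → ℂ, ∀ x ∈ B, Ichi Γ a b χ φ x =
      (1 / 2 : ℂ) * (φ x + (χ x : ℂ) * φ a + ((1 - χ x : ℝ) : ℂ) * φ b)) ∧
    -- `I_χ` is linear
    (∀ (c : ℂ) (φ ψ : K → ℂ), Ichi Γ a b χ (fun x => c * φ x + ψ x) =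
      fun x => c * Ichi Γ a b χ φ x + Ichi Γ a b χ ψ x) ∧
    -- `I_χ` is a bijection with the stated inverse, which preserves continuity
    (∀ φ : K → ℂ, IchiInv Γ a b χ (Ichi Γ a b χ φ) = φ) ∧
    (∀ ψ : K → ℂ, Ichi Γ a b χ (IchiInv Γ a b χ ψ) = ψ) ∧
    (∀ ψ : K → ℂ, Continuous ψ → Continuous (IchiInv Γ a b χ ψ)) ∧
    -- operator norm bound: `‖I_χ φ‖_∞ ≤ ‖φ‖_{∞,0}`
    (∀ φ : K → ℂ, Continuous φ →
      (⨆ x : K, ‖Ichi Γ a b χ φ x‖) ≤ cornerNorm Γ B a b χ φ) := by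
  -- basic membership facts
  have hab : a ∈ Γ ∩ B ∧ b ∈ Γ ∩ B := by
    rw [hinter]; constructor <;> simp
  have haΓ : a ∈ Γ := hab.1.1
  have hbΓ : b ∈ Γ := hab.2.1
  have hmemB : ∀ x, x ∉ Γ → x ∈ B := by
    intro x hx
    have : x ∈ Γ ∪ B := by rw [hcover]; exact Set.mem_univ x
    exact this.resolve_left hx
  have hfront : ∀ x ∈ frontier Γ, x = a ∨ x = b := by
    intro x hx
    rw [frontier_eq_closure_inter_closure] at hx
    have h1 : x ∈ Γ := by rw [← hΓ.closure_eq]; exact hx.1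
    have h2 : x ∈ B := by
      have hsub : closure Γᶜ ⊆ B := closure_minimal
        (fun y hy => hmemB y hy) hB
      exact hsub hx.2
    have : x ∈ ({a, b} : Set K) := by rw [← hinter]; exact ⟨h1, h2⟩
    simpa using this
  -- the two branch formulas agree at a and b
  have hagree : ∀ φ : K → ℂ, ∀ x, x = a ∨ x = b →
      φ x = (1 / 2 : ℂ) * (φ x + (χ x : ℂ) * φ a + ((1 - χ x : ℝ) : ℂ) * φ b) := by
    intro φ x hx
    rcases hx with rfl | rfl <;> simp [hχa, hχb] <;> ring
  refine ⟨?_, ?_, ?_, ?_, ?_, ?_, ?_⟩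
  · -- continuity of Ichi
    intro φ hφ
    unfold Ichi
    apply Continuous.if
    · intro x hx
      exact hagree φ x (hfront x hx)
    · exact hφ
    · fun_prop
  · -- formula on B
    intro φ x hx
    unfold Ichi
    split_ifs with h
    · have : x ∈ ({a, b} : Set K) := by rw [← hinter]; exact ⟨h, hx⟩
      exact hagree φ x (by simpa using this)
    · rfl
  · -- linearity
    intro c φ ψ
    funext x
    unfold Ichi
    split_ifs <;> ring
  · -- left inverse
    intro φ
    funext x
    by_cases h : x ∈ Γ
    · simp [IchiInv, Ichi, h]
    · simp only [IchiInv, Ichi, if_neg h, haΓ, hbΓ, if_true]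
      ring
  · -- right inverse
    intro ψ
    funext x
    by_cases h : x ∈ Γ
    · simp [IchiInv, Ichi, h]
    · simp only [IchiInv, Ichi, if_neg h, haΓ, hbΓ, if_true]
      ring
  · -- continuity of inverse
    intro ψ hψ
    unfold IchiInv
    apply Continuous.if
    · intro x hx
      rcases hfront x hx with rfl | rfl <;> simp [hχa, hχb] <;> ring
    · exact hψ
    · fun_prop
  · -- norm bound
    intro φ hφ
    haveI : Nonempty K := ⟨a⟩
    set F1 : K → ℝ := fun x => ‖χ x • (φ x - φ a)‖ + ‖(1 - χ x) • (φ x - φ b)‖ +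
      ‖φ a‖ + ‖φ b‖ with hF1
    set F2 : K → ℝ := fun x => ‖(1 / 2 : ℝ) • (χ x • (φ x - φ a))‖ +
      ‖(1 / 2 : ℝ) • ((1 - χ x) • (φ x - φ b))‖ + ‖φ a‖ + ‖φ b‖ with hF2
    have hc1 : Continuous F1 := by fun_prop
    have hc2 : Continuous F2 := by fun_prop
    have hbdd1 : BddAbove (F1 '' Γ) :=
      (hΓ.isCompact.image hc1).bddAbove
    have hbdd2 : BddAbove (F2 '' B) :=
      (hB.isCompact.image hc2).bddAbove
    apply ciSup_le
    intro x
    by_cases hx : x ∈ Γ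
    · have hval : Ichi Γ a b χ φ x = φ x := if_pos hx
      have key : ‖φ x‖ ≤ F1 x := by
        have hrw : φ x = χ x • (φ x - φ a) + (1 - χ x) • (φ x - φ b)
            + χ x • φ a + (1 - χ x) • φ b := by
          simp only [Complex.real_smul]
          push_cast
          ring
        calc ‖φ x‖ = ‖χ x • (φ x - φ a) + (1 - χ x) • (φ x - φ b)
              + χ x • φ a + (1 - χ x) • φ b‖ := congrArg norm hrw
          _ ≤ ‖χ x • (φ x - φ a) + (1 - χ x) • (φ x - φ b)
              + χ x • φ a‖ + ‖(1 - χ x) • φ b‖ := norm_add_le _ _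
          _ ≤ (‖χ x • (φ x - φ a) + (1 - χ x) • (φ x - φ b)‖ + ‖χ x • φ a‖)
              + ‖(1 - χ x) • φ b‖ := by gcongr; exact norm_add_le _ _
          _ ≤ (‖χ x • (φ x - φ a)‖ + ‖(1 - χ x) • (φ x - φ b)‖ + ‖χ x • φ a‖)
              + ‖(1 - χ x) • φ b‖ := by gcongr; exact norm_add_le _ _
          _ ≤ F1 x := by
              have h01 := hχ01 x
              have e1 : ‖χ x • φ a‖ ≤ ‖φ a‖ := by
                rw [norm_smul, Real.norm_eq_abs, abs_of_nonneg h01.1]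
                exact mul_le_of_le_one_left (norm_nonneg _) h01.2
              have e2 : ‖(1 - χ x) • φ b‖ ≤ ‖φ b‖ := by
                rw [norm_smul, Real.norm_eq_abs, abs_of_nonneg (by linarith [h01.2])]
                exact mul_le_of_le_one_left (norm_nonneg _) (by linarith [h01.1])
              simp only [hF1]
              linarith
      calc ‖Ichi Γ a b χ φ x‖ = ‖φ x‖ := by rw [hval]
        _ ≤ F1 x := key
        _ ≤ sSup (F1 '' Γ) := le_csSup hbdd1 ⟨x, hx, rfl⟩
        _ ≤ cornerNorm Γ B a b χ φ := le_max_left _ _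
    · have hxB : x ∈ B := hmemB x hx
      have hval : Ichi Γ a b χ φ x =
          (1 / 2 : ℂ) * (φ x + (χ x : ℂ) * φ a + ((1 - χ x : ℝ) : ℂ) * φ b) :=
        if_neg hx
      have key : ‖Ichi Γ a b χ φ x‖ ≤ F2 x := by
        have hrw : Ichi Γ a b χ φ x = (1 / 2 : ℝ) • (χ x • (φ x - φ a))
            + (1 / 2 : ℝ) • ((1 - χ x) • (φ x - φ b))
            + χ x • φ a + (1 - χ x) • φ b := by
          rw [hval]
          simp only [Complex.real_smul]
          push_cast
          ring
        calc ‖Ichi Γ a b χ φ x‖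
            = ‖(1 / 2 : ℝ) • (χ x • (φ x - φ a))
              + (1 / 2 : ℝ) • ((1 - χ x) • (φ x - φ b))
              + χ x • φ a + (1 - χ x) • φ b‖ := congrArg norm hrw
          _ ≤ ‖(1 / 2 : ℝ) • (χ x • (φ x - φ a))
              + (1 / 2 : ℝ) • ((1 - χ x) • (φ x - φ b))
              + χ x • φ a‖ + ‖(1 - χ x) • φ b‖ := norm_add_le _ _
          _ ≤ (‖(1 / 2 : ℝ) • (χ x • (φ x - φ a))
              + (1 / 2 : ℝ) • ((1 - χ x) • (φ x - φ b))‖ + ‖χ x • φ a‖)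
              + ‖(1 - χ x) • φ b‖ := by gcongr; exact norm_add_le _ _
          _ ≤ (‖(1 / 2 : ℝ) • (χ x • (φ x - φ a))‖
              + ‖(1 / 2 : ℝ) • ((1 - χ x) • (φ x - φ b))‖ + ‖χ x • φ a‖)
              + ‖(1 - χ x) • φ b‖ := by gcongr; exact norm_add_le _ _
          _ ≤ F2 x := by
              have h01 := hχ01 x
              have e1 : ‖χ x • φ a‖ ≤ ‖φ a‖ := by
                rw [norm_smul, Real.norm_eq_abs, abs_of_nonneg h01.1]
                exact mul_le_of_le_one_left (norm_nonneg _) h01.2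
              have e2 : ‖(1 - χ x) • φ b‖ ≤ ‖φ b‖ := by
                rw [norm_smul, Real.norm_eq_abs, abs_of_nonneg (by linarith [h01.2])]
                exact mul_le_of_le_one_left (norm_nonneg _) (by linarith [h01.1])
              simp only [hF2]
              linarith
      calc ‖Ichi Γ a b χ φ x‖ ≤ F2 x := key
        _ ≤ sSup (F2 '' B) := le_csSup hbdd2 ⟨x, hxB, rfl⟩
        _ ≤ cornerNorm Γ B a b χ φ := le_max_right _ _
end

section
/- Corner angle bound for the double-layer Gauss integral over a small circular arc: let R > 0 and x_A = (−R, 0). Parametrize the lower circle by y(t) = R(cos t, sin t) with outward unit normal ν(y(t)) = (cos t, sin t) and arclength element R dt. Then there exists r₀ ∈ (0, R) such that for every r ∈ (0, r₀], every σ ∈ (0, 2 arcsin(r/(2R))] (so that the arc {y(t) : π < t < π + σ} consists of points of the circle with y₂ < 0 within distance r of x_A), and every x = (x₁, 0) with −R ≤ x₁ ≤ −R + r, one has 2 ∫_π^{π+σ} (1/2π) · |ν(y(t))·(x − y(t))| / |x − y(t)|² · R dt ≤ 3/4. (This expresses that twice the total variation of the double-layer potential of Φ₀ with density 1 over the arc,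 which equals α(x)/π with α(x) the angle at x subtended by the endpoints of the arc, is at most 3/4 for r small, since the interior angle at the corner x_A is π/2.) -/
open Real Set MeasureTheory

/-!
Put `x = (-a, 0)`, let `ε = R - a` be its distance to the corner, and write `t = π + s`. Since
`x` lies in the disc the kernel has a constant sign, and it equals
`(ε + a (1 - cos s)) / (ε² + 2aR (1 - cos s))`. The part with numerator `a (1 - cos s)` is at
most `1 / (2R)`. For the part with numerator `ε`, the estimate `1 - cos s ≥ 2s²/5` gives the
Poisson kernel `ε / (ε² + (βs)²)` as a majorant, and its integral is at most `π / (2β)` for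
every `ε`; this accounts for the right angle at the corner. With `β = 4R/5`, twice the
normalised integral is at most `5/8 + σ/(2π)`, and `σ ≤ πr/(2R)` is small.
-/

/-- `2π |∂Φ₀(x, y)/∂ν(y)|` at `x = (x₁, 0)` and `y = y(t)`. -/
noncomputable def arcKernel (R x₁ t : ℝ) : ℝ :=
  |cos t * (x₁ - R * cos t) + sin t * (0 - R * sin t)| /
    ((x₁ - R * cos t) ^ 2 + (0 - R * sin t) ^ 2)

lemma two_fifths_mul_sq_le_one_sub_cos {s : ℝ} (hs : |s| ≤ 1) : 2 / 5 * s ^ 2 ≤ 1 - cos s := by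
  have h := (abs_le.1 (cos_bound hs)).2
  have hs4 : |s| ^ 4 ≤ s ^ 2 := by
    rw [show |s| ^ 4 = s ^ 2 * |s| ^ 2 by rw [← sq_abs s]; ring]
    exact mul_le_of_le_one_right (sq_nonneg s) (pow_le_one₀ (abs_nonneg s) hs)
  nlinarith

lemma arcsin_le_pi_div_two_mul {y : ℝ} (h₀ : 0 ≤ y) (h₁ : y ≤ 1) : arcsin y ≤ π / 2 * y := by
  have h := mul_le_sin (arcsin_nonneg.2 h₀) (arcsin_le_pi_div_two y)
  rw [sin_arcsin (by linarith) h₁] at h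
  rw [div_mul_eq_mul_div, div_le_iff₀ pi_pos] at h
  linarith

lemma arcKernel_add_pi (R a s : ℝ) :
    arcKernel R (-a) (s + π) =
      |R - a + a * (1 - cos s)| / ((R - a) ^ 2 + 2 * a * R * (1 - cos s)) := by
  rw [arcKernel, cos_add_pi, sin_add_pi, ← abs_neg]
  congr 1
  · congr 1
    linear_combination R * sin_sq_add_cos_sq s
  · linear_combination R ^ 2 * sin_sq_add_cos_sq s

lemma arcKernel_add_pi_le {R a β s : ℝ} (ha : 0 ≤ a) (haR : a ≤ R) (hβs : 0 < β * s)
    (hcos : (β * s) ^ 2 ≤ 2 * a * R * (1 - cos s)) :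
    arcKernel R (-a) (s + π) ≤ (R - a) / ((R - a) ^ 2 + (β * s) ^ 2) + 1 / (2 * R) := by
  have hc : 0 ≤ 1 - cos s := sub_nonneg.2 (cos_le_one s)
  have hD : 0 < (R - a) ^ 2 + (β * s) ^ 2 := by positivity
  have haR₀ : 0 < a * R := by nlinarith [pow_pos hβs 2]
  have hR : 0 < R := by nlinarith
  rw [arcKernel_add_pi, abs_of_nonneg (by nlinarith), add_div]
  refine add_le_add (div_le_div_of_nonneg_left (by linarith) hD (by linarith)) ?_
  rw [div_le_div_iff₀ (by linarith) (by positivity)]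
  nlinarith

lemma intervalIntegrable_div_sq_add_mul_sq (ε β a b : ℝ) :
    IntervalIntegrable (fun s => ε / (ε ^ 2 + (β * s) ^ 2)) volume a b := by
  rcases eq_or_ne ε 0 with rfl | hε
  · simp
  · exact (continuous_const.div (by fun_prop) fun s => by positivity).intervalIntegrable a b

lemma integral_div_sq_add_mul_sq {ε β : ℝ} (hε : 0 < ε) (hβ : 0 < β) (σ : ℝ) :
    ∫ s in 0..σ, ε / (ε ^ 2 + (β * s) ^ 2) = arctan (β / ε * σ) / β := by
  have h : ∀ s, ε / (ε ^ 2 + (β * s) ^ 2) = ε⁻¹ * (1 + (β / ε * s) ^ 2)⁻¹ := fun s => by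
    field_simp
  simp_rw [h]
  rw [intervalIntegral.integral_const_mul,
    intervalIntegral.integral_comp_mul_left (fun x => (1 + x ^ 2)⁻¹) (by positivity),
    integral_inv_one_add_sq]
  simp only [inv_div, mul_zero, arctan_zero, sub_zero, smul_eq_mul]
  field_simp

lemma integral_div_sq_add_mul_sq_le {ε β : ℝ} (hε : 0 ≤ ε) (hβ : 0 < β) (σ : ℝ) :
    ∫ s in 0..σ, ε / (ε ^ 2 + (β * s) ^ 2) ≤ π / (2 * β) := by
  rcases hε.eq_or_lt with rfl | hε
  · simp only [ne_eq, OfNat.ofNat_ne_zero, not_false_eq_true, zero_pow, zero_add, zero_div,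
      intervalIntegral.integral_zero]
    positivity
  · rw [integral_div_sq_add_mul_sq hε hβ, div_le_div_iff₀ hβ (by positivity)]
    nlinarith [arctan_lt_pi_div_two (β / ε * σ)]

lemma integral_arcKernel_le {R a β σ : ℝ} (ha : 0 ≤ a) (haR : a ≤ R) (hβ : 0 < β)
    (hσ : 0 ≤ σ) (hcos : ∀ s ∈ Ioc 0 σ, (β * s) ^ 2 ≤ 2 * a * R * (1 - cos s)) :
    ∫ t in π..(π + σ), arcKernel R (-a) t ≤ π / (2 * β) + σ / (2 * R) := by
  have hbound : ∀ s ∈ Ioc 0 σ,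
      arcKernel R (-a) (s + π) ≤ (R - a) / ((R - a) ^ 2 + (β * s) ^ 2) + 1 / (2 * R) :=
    fun s hs => arcKernel_add_pi_le ha haR (mul_pos hβ hs.1) (hcos s hs)
  rw [show ∫ t in π..(π + σ), arcKernel R (-a) t = ∫ s in 0..σ, arcKernel R (-a) (s + π) by
    rw [intervalIntegral.integral_comp_add_right, zero_add, add_comm]]
  calc ∫ s in 0..σ, arcKernel R (-a) (s + π)
      ≤ ∫ s in 0..σ, ((R - a) / ((R - a) ^ 2 + (β * s) ^ 2) + 1 / (2 * R)) := by
        -- No integrability of the kernel is needed; at `a = R` it is `0 / 0` at `s = 0`.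
        rw [intervalIntegral.integral_of_le hσ, intervalIntegral.integral_of_le hσ]
        refine integral_mono_of_nonneg (ae_of_all _ fun s => ?_) ?_ ?_
        · exact div_nonneg (abs_nonneg _) (by positivity)
        · exact ((intervalIntegrable_div_sq_add_mul_sq _ _ _ _).add
            intervalIntegrable_const).1
        · exact (ae_restrict_iff' measurableSet_Ioc).2 (ae_of_all _ hbound)
    _ = (∫ s in 0..σ, (R - a) / ((R - a) ^ 2 + (β * s) ^ 2)) + σ / (2 * R) := by
        rw [intervalIntegral.integral_add (intervalIntegrable_div_sq_add_mul_sq _ _ _ _)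
          intervalIntegrable_const, intervalIntegral.integral_const, smul_eq_mul, sub_zero,
          mul_one_div]
    _ ≤ π / (2 * β) + σ / (2 * R) := by
        gcongr
        exact integral_div_sq_add_mul_sq_le (sub_nonneg.2 haR) hβ σ

lemma sq_four_fifths_mul_le_two_mul_one_sub_cos {R a s : ℝ} (hR : 0 < R) (ha : 7 / 8 * R ≤ a)
    (hs : |s| ≤ 1) : (4 / 5 * R * s) ^ 2 ≤ 2 * a * R * (1 - cos s) :=
  calc (4 / 5 * R * s) ^ 2 ≤ 2 * (7 / 8 * R) * R * (2 / 5 * s ^ 2) := by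
        nlinarith [sq_nonneg (R * s)]
    _ ≤ 2 * a * R * (1 - cos s) := by
        gcongr
        · nlinarith
        · exact two_fifths_mul_sq_le_one_sub_cos hs

/-- Corner angle bound for the double-layer Gauss integral over a small circular arc:
with `y(t) = R(cos t, sin t)`, outward normal `ν(y(t)) = (cos t, sin t)`, arclength
element `R dt`, corner point `x_A = (-R, 0)`, for `r` small, for any sub-arc
`{y(t) : π < t < π + σ}` of the lower circle of chord length at most `r`
(i.e. `σ ≤ 2 arcsin(r/(2R))`) and any `x = (x₁, 0)` with `-R ≤ x₁ ≤ -R + r`, twice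
the (1/2π)-normalized total variation of the double-layer kernel over the arc is
at most `3/4`. -/
theorem doubleLayer_corner_arc_bound (R : ℝ) (hR : 0 < R) :
    ∃ r₀ : ℝ, 0 < r₀ ∧ r₀ < R ∧
      ∀ r : ℝ, 0 < r → r ≤ r₀ →
      ∀ σ : ℝ, 0 < σ → σ ≤ 2 * Real.arcsin (r / (2 * R)) →
      ∀ x₁ : ℝ, -R ≤ x₁ → x₁ ≤ -R + r →
        2 * ∫ t in π..(π + σ),
            (1 / (2 * π)) *
              (|Real.cos t * (x₁ - R * Real.cos t) +
                  Real.sin t * (0 - R * Real.sin t)| /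
                ((x₁ - R * Real.cos t) ^ 2 + (0 - R * Real.sin t) ^ 2)) * R
          ≤ 3 / 4 := by
  refine ⟨R / 8, by positivity, by linarith, fun r hr hr₀ σ hσ hσr x₁ hx₁ hx₁r => ?_⟩
  have hrR : r / (2 * R) ≤ 1 / 16 := by
    rw [div_le_iff₀ (by positivity)]
    linarith
  have hσ₁ : σ ≤ π / 16 := by
    nlinarith [arcsin_le_pi_div_two_mul (y := r / (2 * R)) (by positivity) (by linarith), pi_pos]
  have hK : ∫ t in π..(π + σ), arcKernel R x₁ t ≤ π / (2 * (4 / 5 * R)) + σ / (2 * R) := by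
    simpa using integral_arcKernel_le (a := -x₁) (by linarith) (by linarith) (by positivity)
      hσ.le fun s hs => sq_four_fifths_mul_le_two_mul_one_sub_cos hR (by linarith)
        (by rw [abs_of_pos hs.1]; linarith [hs.2, pi_lt_four])
  change 2 * ∫ t in π..(π + σ), 1 / (2 * π) * arcKernel R x₁ t * R ≤ 3 / 4
  calc 2 * ∫ t in π..(π + σ), 1 / (2 * π) * arcKernel R x₁ t * R
      = R / π * ∫ t in π..(π + σ), arcKernel R x₁ t := by
        rw [intervalIntegral.integral_mul_const, intervalIntegral.integral_const_mul]
        ring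
    _ ≤ R / π * (π / (2 * (4 / 5 * R)) + σ / (2 * R)) := by gcongr
    _ = 5 / 8 + σ / (2 * π) := by
        field_simp
        ring
    _ ≤ 3 / 4 := by
        have : σ / (2 * π) ≤ 1 / 32 := by
          rw [div_le_iff₀ (by positivity)]
          linarith
        linarith
end
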